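/- Let G be an ancestral graph on vertex set [p] and 𝓘 a multiset of intervention targets that does not doubly-intervene on any selection adjacent node of G. If i ∈ W_𝓘 and j ∈ [p] are not adjacent in the interventional graph G^𝓘, then i and j are not adjacent in the unique maximal extension \bar{G^𝓘} of G^𝓘. In particular, i is m-separated from j given (ant(j) ∪ W_𝓘) \ {i,j} in G^𝓘, where ant(j) denotes the set of nodes anterior to j. -/

import Mathlib

/-
Common formalization infrastructure for loopless mixed graphs (LMGs),
m-separation, Markov equivalence, interventional graphs, ribbons,
ancestral graphs, colliders with order, and the head/tail factorization
machinery of acyclic directed mixed graphs (ADMGs), following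
"Distributional Invariances and Interventional Markov Equivalence
for Mixed Graph Models" (Solus).
-/

open Relation

/-- An endpoint mark of an edge in a mixed graph: either a tail or an arrowhead. -/
inductive Mark : Type
  | tail : Mark
  | arrow : Mark
  deriving DecidableEq

/-- A mixed graph on a vertex type `V`: `edge a b m₁ m₂` means there is an edge
between `a` and `b` carrying mark `m₁` at `a` and mark `m₂` at `b`.
Undirected edges are `(tail, tail)`, directed `a → b` is `(tail, arrow)`,
and bidirected is `(arrow, arrow)`. -/
structure MixedGraph (V : Type) : Type where
  edge : V → V → Mark → Mark → Prop

namespace MixedGraph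

variable {V : Type}

/-- A loopless mixed graph: edges are symmetric (with endpoint marks swapped) and no loops. -/
def IsLMG (G : MixedGraph V) : Prop :=
  (∀ a b m₁ m₂, G.edge a b m₁ m₂ → G.edge b a m₂ m₁) ∧ ∀ a m₁ m₂, ¬ G.edge a a m₁ m₂

/-- Two vertices are adjacent if there is some edge between them. -/
def adj (G : MixedGraph V) (a b : V) : Prop := ∃ m₁ m₂, G.edge a b m₁ m₂

/-- A simple mixed graph: at most one edge between any two nodes. -/
def Simple (G : MixedGraph V) : Prop :=
  ∀ a b m₁ m₂ n₁ n₂, G.edge a b m₁ m₂ → G.edge a b n₁ n₂ → m₁ = n₁ ∧ m₂ = n₂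

/-- A directed edge `a → b`. -/
def dirEdge (G : MixedGraph V) (a b : V) : Prop := G.edge a b Mark.tail Mark.arrow

/-- A bidirected edge `a ↔ b`. -/
def bidirEdge (G : MixedGraph V) (a b : V) : Prop := G.edge a b Mark.arrow Mark.arrow

/-- An undirected edge `a − b`. -/
def undirEdge (G : MixedGraph V) (a b : V) : Prop := G.edge a b Mark.tail Mark.tail

/-- `a` is an ancestor of `b` (reflexively: there is a directed path, possibly trivial). -/
def ancestor (G : MixedGraph V) (a b : V) : Prop := ReflTransGen G.dirEdge a b

/-- A node is selection adjacent when it is an endpoint of an undirected edge. -/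
def selectionAdjacent (G : MixedGraph V) (a : V) : Prop := ∃ b, G.undirEdge a b ∨ G.undirEdge b a

/-- An ancestral graph: an LMG with no directed cycles, no bidirected edge with a
(nontrivial) directed path between its endpoints, and no arrowhead pointing into a
selection adjacent node. -/
def IsAncestral (G : MixedGraph V) : Prop :=
  G.IsLMG ∧ (∀ a, ¬ TransGen G.dirEdge a a) ∧
    (∀ a b, G.bidirEdge a b → ¬ TransGen G.dirEdge a b ∧ ¬ TransGen G.dirEdge b a) ∧
    ∀ a, G.selectionAdjacent a → ∀ b m, ¬ G.edge b a m Mark.arrow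

/-- An acyclic directed mixed graph: only directed and bidirected edges, no directed cycles. -/
def IsADMG (G : MixedGraph V) : Prop :=
  G.IsLMG ∧ (∀ a b m₁ m₂, G.edge a b m₁ m₂ → ¬ (m₁ = Mark.tail ∧ m₂ = Mark.tail)) ∧
    ∀ a, ¬ TransGen G.dirEdge a a

/-- A directed acyclic graph: only directed edges, and no directed cycles. -/
def IsDAG (G : MixedGraph V) : Prop :=
  G.IsLMG ∧
    (∀ a b m₁ m₂, G.edge a b m₁ m₂ →
      (m₁ = Mark.tail ∧ m₂ = Mark.arrow) ∨ (m₁ = Mark.arrow ∧ m₂ = Mark.tail)) ∧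
    ∀ a, ¬ TransGen G.dirEdge a a

/-- A directed ancestral graph: an ancestral graph with no undirected edges. -/
def IsDirectedAncestral (G : MixedGraph V) : Prop := G.IsAncestral ∧ ∀ a b, ¬ G.undirEdge a b

/-- A walk in a mixed graph `G`, recording at each step the pair of endpoint marks used. -/
structure MWalk (G : MixedGraph V) : Type where
  len : ℕ
  vtx : ℕ → V
  mk₁ : ℕ → Mark
  mk₂ : ℕ → Mark
  isEdge : ∀ i, i < len → G.edge (vtx i) (vtx (i + 1)) (mk₁ i) (mk₂ i)

namespace MWalk

variable {G : MixedGraph V}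

/-- The interior vertex at position `i` is a collider on the walk. -/
def colliderAt (w : MWalk G) (i : ℕ) : Prop :=
  0 < i ∧ i < w.len ∧ w.mk₂ (i - 1) = Mark.arrow ∧ w.mk₁ i = Mark.arrow

/-- The walk is a path: all of its vertices are pairwise distinct. -/
def IsPath (w : MWalk G) : Prop :=
  ∀ i j, i ≤ w.len → j ≤ w.len → w.vtx i = w.vtx j → i = j

/-- The walk is m-connecting given `C`: all colliders are in `C` or ancestors of `C`,
all non-collider vertices are outside of `C`. -/
def mConnecting (w : MWalk G) (C : Set V) : Prop :=
  (∀ i, w.colliderAt i → ∃ c ∈ C, G.ancestor (w.vtx i) c) ∧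
    ∀ i, i ≤ w.len → ¬ w.colliderAt i → w.vtx i ∉ C

end MWalk

/-- There is an m-connecting path between `a` and `b` given `C`. -/
def mConnected (G : MixedGraph V) (a b : V) (C : Set V) : Prop :=
  ∃ w : MWalk G, w.IsPath ∧ w.vtx 0 = a ∧ w.vtx w.len = b ∧ w.mConnecting C

/-- `C` m-separates `A` and `B` in `G`. -/
def mSep (G : MixedGraph V) (A B C : Set V) : Prop := ∀ a ∈ A, ∀ b ∈ B, ¬ G.mConnected a b C

/-- The (formal) independence model `J(G)`: triples `⟨A,B∣C⟩` with `A,B` disjoint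
and m-separated given `C`. -/
def indep (G : MixedGraph V) (A B C : Set V) : Prop := Disjoint A B ∧ G.mSep A B C

/-- Markov equivalence: equal independence models. -/
def MarkovEquiv (G H : MixedGraph V) : Prop := ∀ A B C : Set V, G.indep A B C ↔ H.indep A B C

/-- The result of adding a single edge (with marks `m₁, m₂`) between `a` and `b`. -/
def addEdge (G : MixedGraph V) (a b : V) (m₁ m₂ : Mark) : MixedGraph V where
  edge x y n₁ n₂ := G.edge x y n₁ n₂ ∨ (x = a ∧ y = b ∧ n₁ = m₁ ∧ n₂ = m₂) ∨
    (x = b ∧ y = a ∧ n₁ = m₂ ∧ n₂ = m₁)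

/-- A mixed graph is maximal if adding any edge between nonadjacent vertices changes
its independence model. -/
def IsMaximal (G : MixedGraph V) : Prop :=
  ∀ a b, a ≠ b → ¬ G.adj a b → ∀ m₁ m₂, ¬ MarkovEquiv (G.addEdge a b m₁ m₂) G

/-- `G` is an (edge-)subgraph of `K` on the same vertex set. -/
def Subgraph (G K : MixedGraph V) : Prop := ∀ a b m₁ m₂, G.edge a b m₁ m₂ → K.edge a b m₁ m₂

/-- `K` is the maximal ancestral graph extension of the ancestral graph `G`:
a Markov equivalent maximal ancestral supergraph. -/
def IsMAGExtension (G K : MixedGraph V) : Prop :=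
  Subgraph G K ∧ K.IsAncestral ∧ MarkovEquiv G K ∧ K.IsMaximal

/-- `G` contains a ribbon: a collider path `⟨i,j,k⟩` with no endpoint-identical edge
between `i` and `k` such that `j` or a descendant of `j` is selection adjacent
or lies on a directed cycle. -/
def hasRibbon (G : MixedGraph V) : Prop :=
  ∃ i j k m₁ m₂, i ≠ k ∧ G.edge i j m₁ Mark.arrow ∧ G.edge j k Mark.arrow m₂ ∧
    ¬ G.edge i k m₁ m₂ ∧ ∃ d, G.ancestor j d ∧ (G.selectionAdjacent d ∨ TransGen G.dirEdge d d)

/-- Ribbonless graph. -/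
def Ribbonless (G : MixedGraph V) : Prop := ¬ G.hasRibbon

/-- `K` is the maximal ribbonless extension of the ribbonless graph `G`. -/
def IsRGExtension (G K : MixedGraph V) : Prop :=
  Subgraph G K ∧ K.Ribbonless ∧ MarkovEquiv G K ∧ K.IsMaximal

/-- `⟨i,j,k⟩` is a collider path (both edges have an arrowhead at `j`). -/
def isCollider (G : MixedGraph V) (i j k : V) : Prop :=
  ∃ m₁ m₂, G.edge i j m₁ Mark.arrow ∧ G.edge j k Mark.arrow m₂

/-- A v-structure: a collider whose endpoints are nonadjacent. -/
def isVStructure (G : MixedGraph V) (i j k : V) : Prop := G.isCollider i j k ∧ ¬ G.adj i k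

/-- There is a discriminating path `⟨w 0, …, w m, w (m+1), w (m+2)⟩ = ⟨v₀,…,v_m,b,c⟩`
for the triple `⟨i,j,k⟩`, all of whose intermediate triples satisfy `P`:
`v₀` and `c` are nonadjacent, `v₁,…,v_m` are parents of `c`, and the triples
`⟨v₀,v₁,v₂⟩, …, ⟨v_{m-1},v_m,b⟩` satisfy `P`. -/
def discPathFor (G : MixedGraph V) (P : V → V → V → Prop) (i j k : V) : Prop :=
  ∃ (m : ℕ) (w : ℕ → V), 1 ≤ m ∧
    ((w m = i ∧ w (m + 1) = j ∧ w (m + 2) = k) ∨ (w m = k ∧ w (m + 1) = j ∧ w (m + 2) = i)) ∧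
    ¬ G.adj (w 0) (w (m + 2)) ∧
    (∀ l, 1 ≤ l → l ≤ m → G.dirEdge (w l) (w (m + 2))) ∧
    (∀ l l', l ≤ m + 2 → l' ≤ m + 2 → w l = w l' → l = l') ∧
    ∀ l, l + 2 ≤ m + 1 → P (w l) (w (l + 1)) (w (l + 2))

/-- `⟨i,j,k⟩` is a collider with order at most `t`. Order `0` colliders are
v-structures; a collider has order at most `t+1` if it has order at most `t` or
lies at the end of a discriminating path all of whose intermediate triples are
colliders of order at most `t`. -/
def colliderOrderLE (G : MixedGraph V) : ℕ → V → V → V → Prop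
  | 0, i, j, k => G.isCollider i j k ∧ ¬ G.adj i k
  | t + 1, i, j, k =>
      colliderOrderLE G t i j k ∨
        (G.isCollider i j k ∧ G.discPathFor (colliderOrderLE G t) i j k)

/-- `⟨i,j,k⟩` is a collider with order (for some order). -/
def hasColliderWithOrder (G : MixedGraph V) (i j k : V) : Prop := ∃ t, G.colliderOrderLE t i j k

/-- `⟨i,j,k⟩` is a collider with order exactly `t`. -/
def colliderOrderEq (G : MixedGraph V) (t : ℕ) (i j k : V) : Prop :=
  G.colliderOrderLE t i j k ∧ ∀ s < t, ¬ G.colliderOrderLE s i j k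

/-- `a` is anterior to `b`: there is a path from `a` to `b` consisting of undirected
edges followed by a directed path toward `b`. -/
def anteriorTo (G : MixedGraph V) (a b : V) : Prop :=
  ∃ c, ReflTransGen G.undirEdge a c ∧ ReflTransGen G.dirEdge c b

/-- The closure of the set of selection adjacent nodes under the operation of
consecutively removing arrowheads pointing into such nodes (`i → j − k` becomes
`i − j − k`, creating the new selection adjacent node `i`). -/
inductive selClosure (G : MixedGraph V) : V → Prop
  | base (a b : V) : G.undirEdge a b → selClosure G a
  | base' (a b : V) : G.undirEdge b a → selClosure G a
  | step (a b : V) : G.dirEdge a b → selClosure G b → selClosure G a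

/-- The anterior graph `G*` of `G`: consecutively remove all arrowheads pointing into
nodes adjacent to an undirected edge. -/
def anteriorGraph (G : MixedGraph V) : MixedGraph V where
  edge a b m₁ m₂ := ∃ n₁ n₂, G.edge a b n₁ n₂ ∧
    ((selClosure G a ∧ m₁ = Mark.tail) ∨ (¬ selClosure G a ∧ m₁ = n₁)) ∧
    ((selClosure G b ∧ m₂ = Mark.tail) ∨ (¬ selClosure G b ∧ m₂ = n₂))

/-- The set of parents of `i`. -/
def parentsSet (G : MixedGraph V) (i : V) : Set V := {a | G.dirEdge a i}

/-- The set of spouses of `i`. -/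
def spousesSet (G : MixedGraph V) (i : V) : Set V := {a | G.bidirEdge i a}

/-- The set of ancestors of a set `S` (including `S` itself). -/
def ancSet (G : MixedGraph V) (S : Set V) : Set V := {a | ∃ s ∈ S, G.ancestor a s}

/-- A set is ancestrally closed when it equals its set of ancestors. -/
def AncestrallyClosed (G : MixedGraph V) (A : Set V) : Prop := A = G.ancSet A

/-- The district of `i` in the induced subgraph on `A`: the connected component of `i`
under bidirected edges within `A`. -/
def districtIn (G : MixedGraph V) (A : Set V) (i : V) : Set V :=
  {j | j ∈ A ∧ ReflTransGen (fun x y => x ∈ A ∧ y ∈ A ∧ G.bidirEdge x y) i j}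

/-- Two vertices lie in a common district of `G`. -/
def sameDistrict (G : MixedGraph V) (a b : V) : Prop :=
  ∃ d, a ∈ G.districtIn Set.univ d ∧ b ∈ G.districtIn Set.univ d

/-- The barren subset of `A`: those `x ∈ A` with no proper descendants inside `A`. -/
def barren (G : MixedGraph V) (A : Set V) : Set V :=
  {x | x ∈ A ∧ ∀ y ∈ A, G.ancestor x y → y = x}

/-- The head-extraction step `Φ_G(A)`. -/
def headsStep (G : MixedGraph V) (A : Set V) : Set (Set V) :=
  {H | H.Nonempty ∧ H = ⋂ i ∈ H, G.barren (G.ancSet (G.districtIn A i))}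

/-- The residual step `Ψ_G(A)`. -/
def psi (G : MixedGraph V) (A : Set V) : Set V := A \ ⋃ H ∈ G.headsStep A, H

/-- The partition `[A]_G` of `A` into heads. -/
def heads (G : MixedGraph V) (A : Set V) : Set (Set V) :=
  {H | ∃ n : ℕ, H ∈ G.headsStep ((G.psi)^[n] A)}

/-- `dis_{an(H)}(H)`: the union of the districts of the elements of `H` in the induced
subgraph on the ancestors of `H`. -/
def headDistrict (G : MixedGraph V) (H : Set V) : Set V :=
  ⋃ i ∈ H, G.districtIn (G.ancSet H) i

/-- The tail of a head `H`: `(dis_{an(H)}(H) \ H) ∪ pa_G(dis_{an(H)}(H))`. -/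
def tailOf (G : MixedGraph V) (H : Set V) : Set V :=
  (G.headDistrict H \ H) ∪ {a | ∃ s ∈ G.headDistrict H, G.dirEdge a s}

end MixedGraph

/-- The index set `W_𝓘` of intervention nodes: (occurrences of) nonempty targets. -/
abbrev InterventionIndex {V ι : Type} (targets : ι → Set V) : Type :=
  {k : ι // (targets k).Nonempty}

/-- The interventional graph `G^𝓘`: add a source node `ω_I` for each nonempty target
`I ∈ 𝓘` together with the edges `ω_I → i` for all `i ∈ I`. -/
def interventionGraph {V ι : Type} (G : MixedGraph V) (targets : ι → Set V) :
    MixedGraph (V ⊕ InterventionIndex targets) where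
  edge a b m₁ m₂ :=
    match a, b with
    | Sum.inl a, Sum.inl b => G.edge a b m₁ m₂
    | Sum.inr k, Sum.inl b => b ∈ targets k.1 ∧ m₁ = Mark.tail ∧ m₂ = Mark.arrow
    | Sum.inl a, Sum.inr k => a ∈ targets k.1 ∧ m₁ = Mark.arrow ∧ m₂ = Mark.tail
    | Sum.inr _, Sum.inr _ => False

/-- The multiset of targets doubly-intervenes on `i`: two distinct elements of the
multiset both contain `i`. -/
def doublyIntervenes {V ι : Type} (targets : ι → Set V) (i : V) : Prop :=
  ∃ k k' : ι, k ≠ k' ∧ i ∈ targets k ∧ i ∈ targets k'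

/-- `𝓘`-Markov equivalence: the interventional graphs have the same independence models. -/
def IMarkovEquiv {V ι : Type} (G H : MixedGraph V) (targets : ι → Set V) : Prop :=
  MixedGraph.MarkovEquiv (interventionGraph G targets) (interventionGraph H targets)

/-- An `𝓘`-collider with order: a collider with order in `G^𝓘` that is not a collider
with order in `G`. -/
def IColliderWithOrder {V ι : Type} (G : MixedGraph V) (targets : ι → Set V)
    (i j k : V ⊕ InterventionIndex targets) : Prop :=
  (interventionGraph G targets).hasColliderWithOrder i j k ∧
    ¬ ∃ i' j' k' : V, i = Sum.inl i' ∧ j = Sum.inl j' ∧ k = Sum.inl k' ∧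
      G.hasColliderWithOrder i' j' k'

/-- An `𝓘`-v-structure: a v-structure of `G^𝓘` with an endpoint in `W_𝓘`. -/
def IVStructure {V ι : Type} (G : MixedGraph V) (targets : ι → Set V)
    (i j k : V ⊕ InterventionIndex targets) : Prop :=
  (interventionGraph G targets).isVStructure i j k ∧
    ((∃ κ, i = Sum.inr κ) ∨ (∃ κ, k = Sum.inr κ))

/-- The induced subgraph of a graph on `[p] ∪ W_𝓘` on the observed vertex set `[p]`. -/
def observedPart {V ι : Type} {targets : ι → Set V}
    (K : MixedGraph (V ⊕ InterventionIndex targets)) : MixedGraph V where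
  edge a b m₁ m₂ := K.edge (Sum.inl a) (Sum.inl b) m₁ m₂

/-!
An m-connecting path from `ω` to `j` given `C = (ant(j) ∪ W) \ {ω, j}` cannot pass through
another intervention node: such a node is a non-collider (its edges point away from it) lying
in `C`. So the path leaves `ω` into `[p]` and stays there. Look at the last edge `v ∗−∗ j`.
If its mark at `v` is a tail, `v` is a non-collider anterior to `j`, hence in `C`. If it is an
arrowhead, walk left from `v`: since arrowheads never point into selection adjacent nodes, the
path runs `⋯ ← u ← v` until it meets a collider, which is an ancestor of `C` and therefore,
carrying an arrowhead, an ancestor of `j`. Thus `v` is a proper ancestor of `j` with an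
arrowhead at `v` on the edge `v ∗− j`, a directed or almost directed cycle. Finally, an edge
`ω ∗−∗ j` in the Markov equivalent extension would m-connect `ω` and `j` given `C`.
-/

namespace MixedGraph

variable {V : Type} {G : MixedGraph V}

lemma mConnected_of_adj {a b : V} {C : Set V} (hab : a ≠ b) (ha : a ∉ C) (hb : b ∉ C)
    (h : G.adj a b) : G.mConnected a b C := by
  obtain ⟨m₁, m₂, he⟩ := h
  refine ⟨⟨1, fun k => if k = 0 then a else b, fun _ => m₁, fun _ => m₂, ?_⟩, ?_, rfl, rfl,
    ?_, ?_⟩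
  · intro i hi
    obtain rfl : i = 0 := by omega
    simpa using he
  · intro i₁ i₂ h₁ h₂ heq
    change i₁ ≤ 1 at h₁
    change i₂ ≤ 1 at h₂
    interval_cases i₁ <;> interval_cases i₂ <;> simp_all [eq_comm]
  · rintro i ⟨hi₀, hi₁, -⟩
    change i < 1 at hi₁
    omega
  · intro i hi _
    change i ≤ 1 at hi
    interval_cases i <;> simpa

lemma not_adj_of_mSep {K : MixedGraph V} {a b : V} {C : Set V} (hGK : G.MarkovEquiv K)
    (hab : a ≠ b) (ha : a ∉ C) (hb : b ∉ C) (hsep : G.mSep {a} {b} C) : ¬ K.adj a b := by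
  intro h
  have hK := ((hGK {a} {b} C).mp ⟨Set.disjoint_singleton.mpr hab, hsep⟩).2
  exact hK a rfl b rfl (mConnected_of_adj hab ha hb h)

namespace IsAncestral

variable (hG : G.IsAncestral)
include hG

lemma not_selectionAdjacent {a b : V} {m : Mark} (h : G.edge b a m Mark.arrow) :
    ¬ G.selectionAdjacent a :=
  fun hsel => hG.2.2.2 a hsel b m h

lemma ancestor_of_anteriorTo {a b c : V} {m : Mark} (harr : G.edge c a m Mark.arrow)
    (h : G.anteriorTo a b) : G.ancestor a b := by
  obtain ⟨d, hu, hd⟩ := h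
  rcases hu.cases_head with rfl | ⟨e, hae, -⟩
  · exact hd
  · exact absurd ⟨e, Or.inl hae⟩ (hG.not_selectionAdjacent harr)

lemma ancestor_of_ancestor_of_anteriorTo {a b c d : V} {m : Mark}
    (harr : G.edge d a m Mark.arrow) (hac : G.ancestor a c) (hcb : G.anteriorTo c b) :
    G.ancestor a b := by
  rcases hac.cases_tail with rfl | ⟨e, hae, hec⟩
  · exact hG.ancestor_of_anteriorTo harr hcb
  · exact (hae.tail hec).trans (hG.ancestor_of_anteriorTo hec hcb)

lemma not_edge_arrow_of_ancestor {a b : V} {m : Mark} (hab : G.ancestor a b) (hne : a ≠ b) :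
    ¬ G.edge a b Mark.arrow m := by
  have hab : TransGen G.dirEdge a b :=
    (reflTransGen_iff_eq_or_transGen.mp hab).resolve_left hne.symm
  intro he
  cases m with
  | tail => exact hG.2.1 b (TransGen.head (hG.1.1 a b _ _ he) hab)
  | arrow => exact (hG.2.2.1 a b he).1 hab

end IsAncestral

end MixedGraph

lemma Relation.ReflTransGen.exists_inl {α β : Type} {r : α ⊕ β → α ⊕ β → Prop}
    {s : α → α → Prop} (hr : ∀ a c, r (.inl a) c → ∃ b, c = .inl b ∧ s a b) {a : α}
    {c : α ⊕ β} (h : ReflTransGen r (.inl a) c) : ∃ b, c = .inl b ∧ ReflTransGen s a b := by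
  induction h with
  | refl => exact ⟨a, rfl, .refl⟩
  | tail _ hcd ih =>
    obtain ⟨b, rfl, hab⟩ := ih
    obtain ⟨d, rfl, hbd⟩ := hr b _ hcd
    exact ⟨d, rfl, hab.tail hbd⟩

section InterventionGraph

variable {V ι : Type} {G : MixedGraph V} {targets : ι → Set V}

lemma interventionGraph_edge_inr_left {k : InterventionIndex targets}
    {y : V ⊕ InterventionIndex targets} {m₁ m₂ : Mark}
    (h : (interventionGraph G targets).edge (.inr k) y m₁ m₂) : m₂ = Mark.arrow := by
  cases y with
  | inl _ => exact h.2.2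
  | inr _ => exact h.elim

lemma interventionGraph_edge_inr_right {k : InterventionIndex targets}
    {x : V ⊕ InterventionIndex targets} {m₁ m₂ : Mark}
    (h : (interventionGraph G targets).edge x (.inr k) m₁ m₂) : m₂ = Mark.tail := by
  cases x with
  | inl _ => exact h.2.2
  | inr _ => exact h.elim

lemma interventionGraph_edge_inl_tail {a : V} {c : V ⊕ InterventionIndex targets} {m : Mark}
    (h : (interventionGraph G targets).edge (.inl a) c Mark.tail m) :
    ∃ b, c = .inl b ∧ G.edge a b Mark.tail m := by
  cases c with
  | inl b => exact ⟨b, rfl, h⟩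
  | inr _ => exact absurd h.2.1 (by decide)

lemma interventionGraph_ancestor_inl {a : V} {c : V ⊕ InterventionIndex targets}
    (h : (interventionGraph G targets).ancestor (.inl a) c) :
    ∃ b, c = .inl b ∧ G.ancestor a b :=
  h.exists_inl fun _ _ => interventionGraph_edge_inl_tail

lemma interventionGraph_anteriorTo_inl {a b : V}
    (h : (interventionGraph G targets).anteriorTo (.inl a) (.inl b)) : G.anteriorTo a b := by
  obtain ⟨c, hu, hd⟩ := h
  obtain ⟨c', rfl, hu'⟩ := hu.exists_inl fun _ _ => interventionGraph_edge_inl_tail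
  obtain ⟨b', hb', hd'⟩ := interventionGraph_ancestor_inl hd
  cases Sum.inl.inj hb'
  exact ⟨c', hu', hd'⟩

def interventionSepSet (G : MixedGraph V) (targets : ι → Set V) (κ : InterventionIndex targets)
    (j : V) : Set (V ⊕ InterventionIndex targets) :=
  ({w | (interventionGraph G targets).anteriorTo w (.inl j)} ∪ Set.range .inr) \
    {.inr κ, .inl j}

namespace MixedGraph.MWalk

variable {κ : InterventionIndex targets} {j : V} {w : MWalk (interventionGraph G targets)}
  (hw : w.IsPath) (h₀ : w.vtx 0 = .inr κ) (hlen : w.vtx w.len = .inl j)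
  (hcon : w.mConnecting (interventionSepSet G targets κ j))
include hw h₀ hlen hcon

lemma exists_vtx_eq_inl {i : ℕ} (hi₁ : 1 ≤ i) (hi : i ≤ w.len) : ∃ a, w.vtx i = .inl a := by
  rcases hi.eq_or_lt with rfl | hi
  · exact ⟨j, hlen⟩
  rcases hv : w.vtx i with a | k
  · exact ⟨a, rfl⟩
  have he := w.isEdge (i - 1) (by omega)
  rw [Nat.sub_add_cancel hi₁, hv] at he
  have hnc : ¬ w.colliderAt i := fun hc => by
    have := hc.2.2.1
    rw [interventionGraph_edge_inr_right he] at this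
    exact Mark.noConfusion this
  refine absurd ⟨Or.inr ⟨k, rfl⟩, ?_⟩ (hv ▸ hcon.2 i hi.le hnc)
  rintro (hk | hk)
  · have := hw i 0 hi.le (Nat.zero_le _) (by rw [hv, h₀, hk])
    omega
  · exact Sum.inr_ne_inl hk

omit hw h₀ hlen in
lemma ancestor_of_colliderAt (hG : G.IsAncestral) {i : ℕ} {a b : V} {m : Mark}
    (hc : w.colliderAt i) (hv : w.vtx i = .inl a) (harr : G.edge b a m Mark.arrow) :
    G.ancestor a j := by
  obtain ⟨c, ⟨hcC | ⟨k, rfl⟩, -⟩, hac⟩ := hcon.1 i hc <;> rw [hv] at hac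
  · obtain ⟨c', rfl, hac'⟩ := interventionGraph_ancestor_inl hac
    exact hG.ancestor_of_ancestor_of_anteriorTo harr hac' (interventionGraph_anteriorTo_inl hcC)
  · obtain ⟨c, hc, -⟩ := interventionGraph_ancestor_inl hac
    exact absurd hc Sum.inr_ne_inl

lemma ancestor_of_mk₁_eq_arrow (hG : G.IsAncestral) {i : ℕ} (hi : i < w.len)
    (hmk : w.mk₁ i = Mark.arrow) {a : V} (hv : w.vtx i = .inl a) : G.ancestor a j := by
  induction i generalizing a with
  | zero => exact absurd (h₀.symm.trans hv) Sum.inr_ne_inl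
  | succ i ih =>
    obtain ⟨b, hb⟩ := exists_vtx_eq_inl hw h₀ hlen hcon (Nat.le_add_left 1 _) hi
    have harr : G.edge b a (w.mk₂ (i + 1)) Mark.arrow := by
      have he := w.isEdge _ hi
      rw [hv, hb, hmk] at he
      exact hG.1.1 _ _ _ _ he
    have he := w.isEdge i (by omega)
    cases hmk₂ : w.mk₂ i with
    | arrow => exact ancestor_of_colliderAt hcon hG ⟨by omega, hi, hmk₂, hmk⟩ hv harr
    | tail =>
      rcases Nat.eq_zero_or_pos i with rfl | hi₀
      · rw [h₀] at he
        exact absurd (interventionGraph_edge_inr_left he) (by rw [hmk₂]; decide)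
      obtain ⟨u, hu⟩ := exists_vtx_eq_inl hw h₀ hlen hcon hi₀ (by omega)
      rw [hu, hv, hmk₂] at he
      cases hmk₁ : w.mk₁ i with
      | tail =>
        rw [hmk₁] at he
        exact absurd ⟨u, Or.inr he⟩ (hG.not_selectionAdjacent harr)
      | arrow =>
        rw [hmk₁] at he
        have hau : G.dirEdge a u := hG.1.1 _ _ _ _ he
        exact ReflTransGen.head hau (ih (by omega) hmk₁ hu)

end MixedGraph.MWalk

lemma interventionGraph_mSep (hG : G.IsAncestral) {κ : InterventionIndex targets} {j : V}
    (hnadj : ¬ (interventionGraph G targets).adj (.inr κ) (.inl j)) :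
    (interventionGraph G targets).mSep {.inr κ} {.inl j} (interventionSepSet G targets κ j) := by
  rintro _ rfl _ rfl ⟨w, hw, h₀, hlen, hcon⟩
  have hlen₂ : 2 ≤ w.len := by
    rcases Nat.lt_or_ge w.len 2 with h | h
    · interval_cases hl : w.len
      · exact absurd (h₀.symm.trans hlen) Sum.inr_ne_inl
      · have he := w.isEdge 0 (by omega)
        rw [h₀, zero_add, hlen] at he
        exact absurd ⟨_, _, he⟩ hnadj
    · exact h
  obtain ⟨v, hv⟩ := w.exists_vtx_eq_inl hw h₀ hlen hcon (i := w.len - 1) (by omega) (by omega)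
  have hvj : v ≠ j := by
    rintro rfl
    have := hw _ _ (Nat.sub_le _ 1) le_rfl (hv.trans hlen.symm)
    omega
  have he := w.isEdge (w.len - 1) (by omega)
  rw [Nat.sub_add_cancel (by omega), hv, hlen] at he
  cases hmk : w.mk₁ (w.len - 1) with
  | arrow =>
    rw [hmk] at he
    exact hG.not_edge_arrow_of_ancestor
      (w.ancestor_of_mk₁_eq_arrow hw h₀ hlen hcon hG (by omega) hmk hv) hvj he
  | tail =>
    have hant : (interventionGraph G targets).anteriorTo (.inl v) (.inl j) := by
      rw [hmk] at he
      cases hm₂ : w.mk₂ (w.len - 1) with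
      | tail => rw [hm₂] at he; exact ⟨.inl j, .single he, .refl⟩
      | arrow => rw [hm₂] at he; exact ⟨.inl v, .refl, .single he⟩
    refine hcon.2 _ (Nat.sub_le _ 1) (fun hc => by simp [hc.2.2.2] at hmk) ?_
    rw [hv]
    exact ⟨Or.inl hant, by simpa using hvj⟩

end InterventionGraph

theorem stmt3_general {p : ℕ} {ι : Type} (G : MixedGraph (Fin p))
    (hG : G.IsAncestral) (targets : ι → Set (Fin p))
    (K : MixedGraph (Fin p ⊕ InterventionIndex targets))
    (hK : MixedGraph.IsRGExtension (interventionGraph G targets) K)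
    (κ : InterventionIndex targets) (j : Fin p)
    (hnadj : ¬ (interventionGraph G targets).adj (Sum.inr κ) (Sum.inl j)) :
    ¬ K.adj (Sum.inr κ) (Sum.inl j) ∧
      (interventionGraph G targets).mSep {Sum.inr κ} {Sum.inl j}
        (({w | (interventionGraph G targets).anteriorTo w (Sum.inl j)} ∪
            Set.range (Sum.inr : InterventionIndex targets → Fin p ⊕ InterventionIndex targets)) \
          {Sum.inr κ, Sum.inl j}) := by
  have hsep := interventionGraph_mSep hG hnadj
  refine ⟨MixedGraph.not_adj_of_mSep hK.2.2.1 Sum.inr_ne_inl ?_ ?_ hsep, hsep⟩ <;>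
    simp [interventionSepSet]

/-- Lemma: no additional intervention adjacencies. Let `G` be an
ancestral graph and `𝓘` a multiset of intervention targets not doubly-intervening on any
selection adjacent node of `G`. If `i ∈ W_𝓘` and `j ∈ [p]` are not adjacent in `G^𝓘`,
then they are not adjacent in the maximal extension of `G^𝓘`; in particular `i` is
m-separated from `j` given `(ant(j) ∪ W_𝓘) \ {i, j}` in `G^𝓘`. -/
theorem stmt3 {p : ℕ} {ι : Type} [Fintype ι] (G : MixedGraph (Fin p))
    (hG : G.IsAncestral) (targets : ι → Set (Fin p))
    (hd : ∀ i, G.selectionAdjacent i → ¬ doublyIntervenes targets i)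
    (K : MixedGraph (Fin p ⊕ InterventionIndex targets))
    (hK : MixedGraph.IsRGExtension (interventionGraph G targets) K)
    (κ : InterventionIndex targets) (j : Fin p)
    (hnadj : ¬ (interventionGraph G targets).adj (Sum.inr κ) (Sum.inl j)) :
    ¬ K.adj (Sum.inr κ) (Sum.inl j) ∧
      (interventionGraph G targets).mSep {Sum.inr κ} {Sum.inl j}
        (({w | (interventionGraph G targets).anteriorTo w (Sum.inl j)} ∪
            Set.range (Sum.inr : InterventionIndex targets → Fin p ⊕ InterventionIndex targets)) \
          {Sum.inr κ, Sum.inl j}) :=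
  stmt3_general G hG targets K hK κ j hnadj
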